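/- arXiv:1907.10522 — 2 statements merged into one kernel-verified Lean document; each statement's English description precedes it below -/
import Mathlib

section
/- For each δ ∈ (0,1), the function x ↦ w'_D(x,δ) is upper semicontinuous on D([0,1];D) with respect to the Skorohod metric d_D. -/
open Set Filter

noncomputable section

/-- Sup norm over `[0,1]`. -/
def unorm (x : ℝ → ℝ) : ℝ := sSup ((fun s => |x s|) '' Icc 0 1)

/-- Càdlàg (right-continuous with left limits) on `[0,1]`. -/
def Cadlag (x : ℝ → ℝ) : Prop :=
  (∀ t ∈ Ico (0:ℝ) 1, Filter.Tendsto x (nhdsWithin t (Ioc t 1)) (nhds (x t))) ∧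
  (∀ t ∈ Ioc (0:ℝ) 1, ∃ L : ℝ, Filter.Tendsto x (nhdsWithin t (Ico 0 t)) (nhds L))

/-- Strictly increasing continuous bijection of `[0,1]` onto itself. -/
def TimeChange (l : ℝ → ℝ) : Prop :=
  ContinuousOn l (Icc 0 1) ∧ StrictMonoOn l (Icc 0 1) ∧ l '' Icc 0 1 = Icc 0 1

/-- Billingsley's metric `d_{J1}°` on the Skorohod space, written as the infimum of all
`r` dominating both `‖λ‖°` and `‖x - y ∘ λ‖` for some time change `λ`. -/
def dJ (x y : ℝ → ℝ) : ℝ :=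
  sInf { r : ℝ | ∃ l, TimeChange l ∧
    (∀ s ∈ Icc (0:ℝ) 1, ∀ s' ∈ Icc (0:ℝ) 1, s < s' →
      |Real.log ((l s' - l s) / (s' - s))| ≤ r) ∧
    (∀ s ∈ Icc (0:ℝ) 1, |x s - y (l s)| ≤ r) }

/-- The classical Skorohod metric `d_{J1}`. -/
def dJ1 (x y : ℝ → ℝ) : ℝ :=
  sInf { r : ℝ | ∃ l, TimeChange l ∧
    (∀ s ∈ Icc (0:ℝ) 1, |l s - s| ≤ r) ∧
    (∀ s ∈ Icc (0:ℝ) 1, |x s - y (l s)| ≤ r) }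

/-- `L` is the left limit (w.r.t. `d_{J1}°`) of the `D`-valued path `X` at `t`. -/
def LeftLimAt (X : ℝ → ℝ → ℝ) (t : ℝ) (L : ℝ → ℝ) : Prop :=
  Cadlag L ∧ ∀ ε > 0, ∃ δ > 0, ∀ u, max 0 (t - δ) ≤ u → u < t → dJ (X u) L < ε

/-- `X ∈ D([0,1];D)`: `D`-valued, right-continuous with left limits w.r.t. `J₁`. -/
def CadlagD (X : ℝ → ℝ → ℝ) : Prop :=
  (∀ t ∈ Icc (0:ℝ) 1, Cadlag (X t)) ∧
  (∀ t ∈ Ico (0:ℝ) 1, ∀ ε > 0, ∃ δ > 0, ∀ u, t ≤ u → u ≤ min 1 (t + δ) → dJ (X u) (X t) < ε) ∧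
  (∀ t ∈ Ioc (0:ℝ) 1, ∃ L, LeftLimAt X t L)

/-- Super-uniform norm on `D([0,1];D)`. -/
def dnorm (X : ℝ → ℝ → ℝ) : ℝ := sSup ((fun t => unorm (X t)) '' Icc 0 1)

/-- Uniform distance `ρ_D` on `D([0,1];D)`. -/
def rhoD (X Y : ℝ → ℝ → ℝ) : ℝ := sSup ((fun t => dJ (X t) (Y t)) '' Icc 0 1)

/-- Skorohod distance `d_D` on `D([0,1];D)`. -/
def dD (X Y : ℝ → ℝ → ℝ) : ℝ :=
  sInf { r : ℝ | ∃ l, TimeChange l ∧ (∀ t ∈ Icc (0:ℝ) 1, |l t - t| ≤ r) ∧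
    (∀ t ∈ Icc (0:ℝ) 1, dJ (X t) (Y (l t)) ≤ r) }

/-- Oscillation `w_D(x,T)` of a `D`-valued path on a time set `T`. -/
def wD (X : ℝ → ℝ → ℝ) (T : Set ℝ) : ℝ :=
  sSup ((fun p : ℝ × ℝ => dJ (X p.1) (X p.2)) '' (T ×ˢ T))

/-- A finite partition `0 = t 0 < t 1 < ... < t v = 1`. -/
def IsPartition (t : ℕ → ℝ) (v : ℕ) : Prop :=
  0 < v ∧ t 0 = 0 ∧ t v = 1 ∧ ∀ i < v, t i < t (i + 1)

/-- The partition is `δ`-sparse: all mesh lengths exceed `δ`. -/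
def Sparse (δ : ℝ) (t : ℕ → ℝ) (v : ℕ) : Prop := ∀ i < v, δ < t (i + 1) - t i

/-- Modulus `w'_D(x,δ)`: infimum over `δ`-sparse partitions of the max oscillation. -/
def wD' (X : ℝ → ℝ → ℝ) (δ : ℝ) : ℝ :=
  sInf { r : ℝ | ∃ t v, IsPartition t v ∧ Sparse δ t v ∧
    ∀ i < v, wD X (Ico (t i) (t (i + 1))) ≤ r }

/-- Modulus `w''_D(x,δ)`. -/
def wD'' (X : ℝ → ℝ → ℝ) (δ : ℝ) : ℝ :=
  sSup ((fun p : ℝ × ℝ × ℝ => min (dJ (X p.2.1) (X p.1)) (dJ (X p.2.2) (X p.2.1))) ''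
    {p : ℝ × ℝ × ℝ | 0 ≤ p.1 ∧ p.1 ≤ p.2.1 ∧ p.2.1 ≤ p.2.2 ∧ p.2.2 ≤ 1 ∧ p.2.2 - p.1 ≤ δ})

/-- Oscillation of a real càdlàg function on a set `T ⊆ [0,1]`. -/
def wR (y : ℝ → ℝ) (T : Set ℝ) : ℝ := sSup ((fun p : ℝ × ℝ => |y p.1 - y p.2|) '' (T ×ˢ T))

/-- Billingsley's modulus `w'(y,δ)` for real càdlàg functions. -/
def wR' (y : ℝ → ℝ) (δ : ℝ) : ℝ :=
  sInf { r : ℝ | ∃ t v, IsPartition t v ∧ Sparse δ t v ∧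
    ∀ i < v, wR y (Ico (t i) (t (i + 1))) ≤ r }

/-- Modulus `w_D(x,δ) = sup_{|t₁-t₂| ≤ δ} d_{J1}°(x(t₁),x(t₂))`. -/
def wDmod (X : ℝ → ℝ → ℝ) (δ : ℝ) : ℝ :=
  sSup ((fun p : ℝ × ℝ => dJ (X p.1) (X p.2)) ''
    {p : ℝ × ℝ | p.1 ∈ Icc (0:ℝ) 1 ∧ p.2 ∈ Icc (0:ℝ) 1 ∧ |p.1 - p.2| ≤ δ})

/-- Maximum jump `j(x) = sup_t d_{J1}°(x(t),x(t-))`. -/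
def jmax (X : ℝ → ℝ → ℝ) : ℝ :=
  sSup {d : ℝ | ∃ t ∈ Ioc (0:ℝ) 1, ∃ L, LeftLimAt X t L ∧ d = dJ (X t) L}
namespace TC

section generic
variable {f : ℝ → ℝ} (hm : StrictMonoOn f (Icc 0 1)) (him : f '' Icc 0 1 = Icc 0 1)
include hm him

lemma g_mem {t : ℝ} (ht : t ∈ Icc (0:ℝ) 1) : f t ∈ Icc (0:ℝ) 1 :=
  him ▸ Set.mem_image_of_mem f ht

lemma g_surj {s : ℝ} (hs : s ∈ Icc (0:ℝ) 1) : ∃ t ∈ Icc (0:ℝ) 1, f t = s := by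
  have h : s ∈ f '' Icc 0 1 := by rw [him]; exact hs
  obtain ⟨t, ht, h⟩ := h; exact ⟨t, ht, h⟩

lemma g_le {a b : ℝ} (ha : a ∈ Icc (0:ℝ) 1) (hb : b ∈ Icc (0:ℝ) 1) (hab : a ≤ b) :
    f a ≤ f b := by
  rcases eq_or_lt_of_le hab with rfl | h
  · exact le_rfl
  · exact (hm ha hb h).le

lemma g_reflect_lt {a b : ℝ} (ha : a ∈ Icc (0:ℝ) 1) (hb : b ∈ Icc (0:ℝ) 1)
    (h : f a < f b) : a < b := by
  by_contra hc
  exact absurd (g_le hm him hb ha (not_lt.1 hc)) (not_le.2 h)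

lemma g_zero : f 0 = 0 := by
  have h0 : (0:ℝ) ∈ Icc (0:ℝ) 1 := ⟨le_rfl, zero_le_one⟩
  obtain ⟨t, ht, hlt⟩ := g_surj hm him h0
  rcases eq_or_lt_of_le ht.1 with rfl | h
  · exact hlt
  · have h1 := hm h0 ht h
    have h2 := (g_mem hm him h0).1
    linarith [hlt ▸ h1]

lemma g_one : f 1 = 1 := by
  have h1 : (1:ℝ) ∈ Icc (0:ℝ) 1 := ⟨zero_le_one, le_rfl⟩
  obtain ⟨t, ht, hlt⟩ := g_surj hm him h1
  rcases eq_or_lt_of_le ht.2 with rfl | h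
  · exact hlt
  · have hlt1 := hm ht h1 h
    have h2 := (g_mem hm him h1).2
    linarith [hlt ▸ hlt1]

lemma g_continuousOn : ContinuousOn f (Icc 0 1) := by
  intro a ha
  have key : ContinuousWithinAt f (Icc 0 1 ∩ Iic a ∪ Icc 0 1 ∩ Ici a) a := by
    apply ContinuousWithinAt.union
    · rcases eq_or_lt_of_le ha.1 with rfl | h0
      · have hsub : Icc (0:ℝ) 1 ∩ Iic 0 ⊆ {(0:ℝ)} := fun x hx => le_antisymm hx.2 hx.1.1
        exact (continuousWithinAt_singleton (f := f) (x := (0:ℝ))).mono hsub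
      · have hnb : Icc (0:ℝ) 1 ∈ nhdsWithin a (Iic a) :=
          mem_of_superset (Icc_mem_nhdsLE_of_mem ⟨h0, le_rfl⟩) (Icc_subset_Icc le_rfl ha.2)
        have hfa0 : 0 < f a := by
          have := hm ⟨le_rfl, zero_le_one⟩ ha h0
          rwa [g_zero hm him] at this
        have hcl : ContinuousWithinAt f (Iic a) a := by
          apply hm.continuousWithinAt_left_of_exists_between hnb
          intro b hb
          have hy : max b 0 ∈ Icc (0:ℝ) 1 := by
            constructor
            · exact le_max_right _ _
            · apply max_le (le_trans (le_of_lt hb) (g_mem hm him ha).2) zero_le_one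
          obtain ⟨c, hc, hfc⟩ := g_surj hm him hy
          exact ⟨c, hc, by rw [hfc]; exact ⟨le_max_left _ _, max_lt hb hfa0⟩⟩
        exact hcl.mono inter_subset_right
    · rcases eq_or_lt_of_le ha.2 with h1 | h1
      · have hsub : Icc (0:ℝ) 1 ∩ Ici a ⊆ {a} := by
          intro x hx; exact le_antisymm (h1 ▸ hx.1.2) hx.2
        exact (continuousWithinAt_singleton (f := f) (x := a)).mono hsub
      · have hnb : Icc (0:ℝ) 1 ∈ nhdsWithin a (Ici a) :=
          mem_of_superset (Icc_mem_nhdsGE_of_mem ⟨le_rfl, h1⟩) (Icc_subset_Icc ha.1 le_rfl)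
        have hfa1 : f a < 1 := by
          have := hm ha ⟨zero_le_one, le_rfl⟩ h1
          rwa [g_one hm him] at this
        have hcr : ContinuousWithinAt f (Ici a) a := by
          apply hm.continuousWithinAt_right_of_exists_between hnb
          intro b hb
          have hy : min b 1 ∈ Icc (0:ℝ) 1 := by
            constructor
            · exact le_min (le_trans (g_mem hm him ha).1 (le_of_lt hb)) zero_le_one
            · exact min_le_right _ _
          obtain ⟨c, hc, hfc⟩ := g_surj hm him hy
          exact ⟨c, hc, by rw [hfc]; exact ⟨lt_min hb hfa1, min_le_left _ _⟩⟩
        exact hcr.mono inter_subset_right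
  refine key.mono fun x hx => ?_
  rcases le_total x a with h | h
  · exact Or.inl ⟨hx, h⟩
  · exact Or.inr ⟨hx, h⟩

end generic

lemma tc_inv {l : ℝ → ℝ} (hl : TimeChange l) :
    ∃ m, TimeChange m ∧ (∀ t ∈ Icc (0:ℝ) 1, m (l t) = t) ∧ (∀ s ∈ Icc (0:ℝ) 1, l (m s) = s) := by
  obtain ⟨hc, hm, him⟩ := hl
  set m := Function.invFunOn l (Icc 0 1) with hmdef
  have hinj : Set.InjOn l (Icc 0 1) := hm.injOn
  have hml : ∀ t ∈ Icc (0:ℝ) 1, m (l t) = t := fun t ht => hinj.leftInvOn_invFunOn ht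
  have hlm : ∀ s ∈ Icc (0:ℝ) 1, l (m s) = s := by
    intro s hs
    apply Function.invFunOn_eq
    obtain ⟨t, ht, h⟩ := g_surj hm him hs
    exact ⟨t, ht, h⟩
  have hmmem : ∀ s ∈ Icc (0:ℝ) 1, m s ∈ Icc (0:ℝ) 1 := by
    intro s hs
    apply Function.invFunOn_mem
    obtain ⟨t, ht, h⟩ := g_surj hm him hs
    exact ⟨t, ht, h⟩
  have hmsm : StrictMonoOn m (Icc 0 1) := by
    intro s hs s' hs' hss'
    have h1 : l (m s) < l (m s') := by rw [hlm s hs, hlm s' hs']; exact hss'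
    exact g_reflect_lt hm him (hmmem s hs) (hmmem s' hs') h1
  have hmim : m '' Icc 0 1 = Icc 0 1 := by
    apply Set.Subset.antisymm
    · rintro x ⟨s, hs, rfl⟩; exact hmmem s hs
    · intro t ht
      exact ⟨l t, g_mem hm him ht, hml t ht⟩
  exact ⟨m, ⟨g_continuousOn hmsm hmim, hmsm, hmim⟩, hml, hlm⟩



lemma tc_mem {l : ℝ → ℝ} (hl : TimeChange l) {t : ℝ} (ht : t ∈ Icc (0:ℝ) 1) :
    l t ∈ Icc (0:ℝ) 1 := g_mem hl.2.1 hl.2.2 ht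

lemma tc_zero {l : ℝ → ℝ} (hl : TimeChange l) : l 0 = 0 := g_zero hl.2.1 hl.2.2

lemma tc_one {l : ℝ → ℝ} (hl : TimeChange l) : l 1 = 1 := g_one hl.2.1 hl.2.2

lemma tc_le {l : ℝ → ℝ} (hl : TimeChange l) {a b : ℝ} (ha : a ∈ Icc (0:ℝ) 1)
    (hb : b ∈ Icc (0:ℝ) 1) (hab : a ≤ b) : l a ≤ l b := g_le hl.2.1 hl.2.2 ha hb hab

lemma tc_id : TimeChange id :=
  ⟨continuousOn_id, fun a _ b _ h => h, Set.image_id _⟩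

lemma tc_comp {l1 l2 : ℝ → ℝ} (h1 : TimeChange l1) (h2 : TimeChange l2) :
    TimeChange (fun s => l1 (l2 s)) := by
  refine ⟨h1.1.comp h2.1 (fun s hs => tc_mem h2 hs), ?_, ?_⟩
  · exact fun a ha b hb h => h1.2.1 (tc_mem h2 ha) (tc_mem h2 hb) (h2.2.1 ha hb h)
  · rw [show (fun s => l1 (l2 s)) '' Icc 0 1 = l1 '' (l2 '' Icc 0 1) from (Set.image_image l1 l2 _).symm,
      h2.2.2, h1.2.2]

def dJset (x y : ℝ → ℝ) : Set ℝ :=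
  { r : ℝ | ∃ l, TimeChange l ∧
    (∀ s ∈ Icc (0:ℝ) 1, ∀ s' ∈ Icc (0:ℝ) 1, s < s' →
      |Real.log ((l s' - l s) / (s' - s))| ≤ r) ∧
    (∀ s ∈ Icc (0:ℝ) 1, |x s - y (l s)| ≤ r) }

lemma dJ_eq (x y : ℝ → ℝ) : dJ x y = sInf (dJset x y) := rfl

lemma dJset_nonneg {x y : ℝ → ℝ} {r : ℝ} (hr : r ∈ dJset x y) : 0 ≤ r := by
  obtain ⟨l, hl, _, hsup⟩ := hr
  exact le_trans (abs_nonneg _) (hsup 0 ⟨le_rfl, zero_le_one⟩)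

lemma dJset_bddBelow (x y : ℝ → ℝ) : BddBelow (dJset x y) :=
  ⟨0, fun r hr => dJset_nonneg hr⟩

lemma dJ_nonneg (x y : ℝ → ℝ) : 0 ≤ dJ x y :=
  Real.sInf_nonneg fun _ hr => dJset_nonneg hr

lemma dJ_le {x y : ℝ → ℝ} {r : ℝ} (hr : r ∈ dJset x y) : dJ x y ≤ r :=
  csInf_le (dJset_bddBelow x y) hr

/-- id-witness: if `x` and `y` are uniformly within `M`, then `M ∈ dJset x y`. -/
lemma id_mem_dJset {x y : ℝ → ℝ} {M : ℝ} (hM : ∀ s ∈ Icc (0:ℝ) 1, |x s - y s| ≤ M) :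
    M ∈ dJset x y := by
  have hM0 : 0 ≤ M := le_trans (abs_nonneg _) (hM 0 ⟨le_rfl, zero_le_one⟩)
  refine ⟨id, tc_id, ?_, hM⟩
  intro s hs s' hs' hss'
  have : (id s' - id s) / (s' - s) = 1 := by
    show (s' - s) / (s' - s) = 1
    exact div_self (ne_of_gt (by linarith))
  rw [this, Real.log_one, abs_zero]
  exact hM0

lemma dJ_le_bound {x y : ℝ → ℝ} {M : ℝ} (hM : ∀ s ∈ Icc (0:ℝ) 1, |x s - y s| ≤ M) :
    dJ x y ≤ M := dJ_le (id_mem_dJset hM)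

lemma dJ_lt_extract {x y : ℝ → ℝ} {ε : ℝ} (hne : (dJset x y).Nonempty)
    (h : dJ x y < ε) : ∃ r ∈ dJset x y, r < ε :=
  exists_lt_of_csInf_lt hne h

/-- Every càdlàg function is bounded on `[0,1]`. -/
lemma cadlag_bounded {x : ℝ → ℝ} (hx : Cadlag x) :
    ∃ M, 0 ≤ M ∧ ∀ s ∈ Icc (0:ℝ) 1, |x s| ≤ M := by
  set A : Set ℝ := {a | a ∈ Icc (0:ℝ) 1 ∧ ∃ M, ∀ s ∈ Icc (0:ℝ) a, |x s| ≤ M} with hA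
  have h0A : (0:ℝ) ∈ A := by
    refine ⟨⟨le_rfl, zero_le_one⟩, |x 0|, ?_⟩
    intro s hs
    have : s = 0 := le_antisymm hs.2 hs.1
    rw [this]
  have hne : A.Nonempty := ⟨0, h0A⟩
  have hbdd : BddAbove A := ⟨1, fun a ha => ha.1.2⟩
  set c := sSup A with hc
  have hc0 : 0 ≤ c := le_csSup hbdd h0A
  have hc1 : c ≤ 1 := csSup_le hne fun a ha => ha.1.2
  have hcA : c ∈ A := by
    rcases eq_or_lt_of_le hc0 with h | hcpos
    · rw [← h]; exact h0A
    · -- use left limit at c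
      obtain ⟨L, hL⟩ := hx.2 c ⟨hcpos, hc1⟩
      rw [Metric.tendsto_nhdsWithin_nhds] at hL
      obtain ⟨d, hd, hdd⟩ := hL 1 one_pos
      have hminpos : 0 < min d c := lt_min hd hcpos
      obtain ⟨a, haA, halt⟩ := exists_lt_of_lt_csSup hne (by linarith : c - min d c / 2 < c)
      obtain ⟨⟨ha0, ha1⟩, Ma, hMa⟩ := haA
      have haC : a ≤ c := le_csSup hbdd ⟨⟨ha0, ha1⟩, Ma, hMa⟩
      refine ⟨⟨hc0, hc1⟩, max (max Ma (|L| + 1)) (|x c|), ?_⟩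
      intro s hs
      rcases le_or_gt s a with h | h
      · exact le_trans (hMa s ⟨hs.1, h⟩) (le_trans (le_max_left _ _) (le_max_left _ _))
      · rcases eq_or_lt_of_le hs.2 with rfl | hsc
        · exact le_max_right _ _
        · have hdist : dist s c < d := by
            rw [Real.dist_eq, abs_sub_lt_iff]
            constructor
            · linarith
            · have : c - min d c / 2 < s := lt_trans halt h
              have hmin : min d c ≤ d := min_le_left _ _
              have hminc : min d c ≤ c := min_le_right _ _
              linarith
          have := hdd ⟨hs.1, hsc⟩ hdist
          rw [Real.dist_eq] at this
          have : |x s| ≤ |L| + 1 := by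
            have h2 := abs_sub_abs_le_abs_sub (x s) L
            linarith
          exact le_trans this (le_trans (le_max_right _ _) (le_max_left _ _))
  -- now show c = 1
  rcases eq_or_lt_of_le hc1 with h | hclt
  · obtain ⟨_, M, hM⟩ := hcA
    rw [h] at hM
    exact ⟨max M 0, le_max_right _ _, fun s hs => le_trans (hM s hs) (le_max_left _ _)⟩
  · exfalso
    have hrc := hx.1 c ⟨hc0, hclt⟩
    rw [Metric.tendsto_nhdsWithin_nhds] at hrc
    obtain ⟨d, hd, hdd⟩ := hrc 1 one_pos
    obtain ⟨_, M, hM⟩ := hcA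
    set c' := min 1 (c + d / 2) with hc'
    have hcc' : c < c' := lt_min hclt (by linarith)
    have hc'A : c' ∈ A := by
      refine ⟨⟨le_trans hc0 hcc'.le, min_le_left _ _⟩, max M (|x c| + 1), ?_⟩
      intro s hs
      rcases le_or_gt s c with h | h
      · exact le_trans (hM s ⟨hs.1, h⟩) (le_max_left _ _)
      · have hs1 : s ≤ 1 := le_trans hs.2 (min_le_left _ _)
        have hdist : dist s c < d := by
          rw [Real.dist_eq, abs_sub_lt_iff]
          constructor
          · have : s ≤ c + d / 2 := le_trans hs.2 (min_le_right _ _)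
            linarith
          · linarith
        have h2 := hdd ⟨h, hs1⟩ hdist
        rw [Real.dist_eq] at h2
        have h3 := abs_sub_abs_le_abs_sub (x s) (x c)
        have : |x s| ≤ |x c| + 1 := by linarith
        exact le_trans this (le_max_right _ _)
    exact absurd (le_csSup hbdd hc'A) (not_le.2 hcc')


lemma dJset_nonempty_of_bounded {x y : ℝ → ℝ} {Mx My : ℝ}
    (hx : ∀ s ∈ Icc (0:ℝ) 1, |x s| ≤ Mx) (hy : ∀ s ∈ Icc (0:ℝ) 1, |y s| ≤ My) :
    (dJset x y).Nonempty := by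
  refine ⟨Mx + My, id_mem_dJset fun s hs => ?_⟩
  calc |x s - y s| ≤ |x s| + |y s| := abs_sub _ _
  _ ≤ Mx + My := add_le_add (hx s hs) (hy s hs)

lemma dJset_symm {x y : ℝ → ℝ} {r : ℝ} (hr : r ∈ dJset x y) : r ∈ dJset y x := by
  obtain ⟨l, hl, hlog, hsup⟩ := hr
  obtain ⟨m, hm, hml, hlm⟩ := tc_inv hl
  refine ⟨m, hm, ?_, ?_⟩
  · intro s hs s' hs' hss'
    have hms : m s ∈ Icc (0:ℝ) 1 := tc_mem hm hs
    have hms' : m s' ∈ Icc (0:ℝ) 1 := tc_mem hm hs'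
    have hmm : m s < m s' := hm.2.1 hs hs' hss'
    have h1 : l (m s) = s := hlm s hs
    have h1' : l (m s') = s' := hlm s' hs'
    have key := hlog (m s) hms (m s') hms' hmm
    have hpos1 : 0 < m s' - m s := by linarith
    have hpos2 : 0 < s' - s := by linarith
    have hratio : (m s' - m s) / (s' - s) = ((l (m s') - l (m s)) / (m s' - m s))⁻¹ := by
      rw [inv_div, h1, h1']
    rw [hratio, Real.log_inv, abs_neg]
    exact key
  · intro s hs
    have := hsup (m s) (tc_mem hm hs)
    rw [hlm s hs] at this
    rwa [abs_sub_comm]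

lemma dJset_comp {x y z : ℝ → ℝ} {r1 r2 : ℝ} (h1 : r1 ∈ dJset x y) (h2 : r2 ∈ dJset y z) :
    (r1 + r2) ∈ dJset x z := by
  obtain ⟨l1, hl1, hlog1, hsup1⟩ := h1
  obtain ⟨l2, hl2, hlog2, hsup2⟩ := h2
  refine ⟨fun s => l2 (l1 s), tc_comp hl2 hl1, ?_, ?_⟩
  · intro s hs s' hs' hss'
    have ha : l1 s ∈ Icc (0:ℝ) 1 := tc_mem hl1 hs
    have ha' : l1 s' ∈ Icc (0:ℝ) 1 := tc_mem hl1 hs'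
    have haa : l1 s < l1 s' := hl1.2.1 hs hs' hss'
    have hb : l2 (l1 s) < l2 (l1 s') := hl2.2.1 ha ha' haa
    have hpos1 : 0 < l1 s' - l1 s := by linarith
    have hpos2 : 0 < s' - s := by linarith
    have hpos3 : 0 < l2 (l1 s') - l2 (l1 s) := by linarith
    have hratio : (l2 (l1 s') - l2 (l1 s)) / (s' - s) =
        ((l2 (l1 s') - l2 (l1 s)) / (l1 s' - l1 s)) * ((l1 s' - l1 s) / (s' - s)) := by
      field_simp
    rw [hratio, Real.log_mul (by positivity) (by positivity), add_comm r1 r2]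
    exact le_trans (abs_add_le _ _) (add_le_add (hlog2 _ ha _ ha' haa) (hlog1 _ hs _ hs' hss'))
  · intro s hs
    have hmem : l1 s ∈ Icc (0:ℝ) 1 := tc_mem hl1 hs
    calc |x s - z (l2 (l1 s))| ≤ |x s - y (l1 s)| + |y (l1 s) - z (l2 (l1 s))| := abs_sub_le _ _ _
    _ ≤ r1 + r2 := add_le_add (hsup1 s hs) (hsup2 _ hmem)

/-- transfer of bounds across small dJ distance -/
lemma bound_transfer {x g : ℝ → ℝ} {K Mx ε : ℝ}
    (hx : ∀ s ∈ Icc (0:ℝ) 1, |x s| ≤ Mx) (hg : ∀ s ∈ Icc (0:ℝ) 1, |g s| ≤ K)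
    (h : dJ x g < ε) : ∀ s ∈ Icc (0:ℝ) 1, |x s| ≤ K + ε := by
  obtain ⟨r, hrmem, hrε⟩ := dJ_lt_extract (dJset_nonempty_of_bounded hx hg) h
  obtain ⟨l, hl, _, hsup⟩ := hrmem
  intro s hs
  have h1 := hsup s hs
  have h2 := hg (l s) (tc_mem hl hs)
  calc |x s| = |(x s - g (l s)) + g (l s)| := by ring_nf
  _ ≤ |x s - g (l s)| + |g (l s)| := abs_add_le _ _
  _ ≤ r + K := add_le_add h1 h2
  _ ≤ K + ε := by linarith

lemma cadlagD_bounded {X : ℝ → ℝ → ℝ} (hX : CadlagD X) :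
    ∃ M, 0 ≤ M ∧ ∀ t ∈ Icc (0:ℝ) 1, ∀ s ∈ Icc (0:ℝ) 1, |X t s| ≤ M := by
  set A : Set ℝ := {a | a ∈ Icc (0:ℝ) 1 ∧ ∃ M, ∀ u ∈ Icc (0:ℝ) a, ∀ s ∈ Icc (0:ℝ) 1, |X u s| ≤ M}
    with hA
  have h0A : (0:ℝ) ∈ A := by
    obtain ⟨M0, hM00, hM0⟩ := cadlag_bounded (hX.1 0 ⟨le_rfl, zero_le_one⟩)
    refine ⟨⟨le_rfl, zero_le_one⟩, M0, fun u hu s hs => ?_⟩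
    have : u = 0 := le_antisymm hu.2 hu.1
    rw [this]; exact hM0 s hs
  have hne : A.Nonempty := ⟨0, h0A⟩
  have hbdd : BddAbove A := ⟨1, fun a ha => ha.1.2⟩
  set c := sSup A with hc
  have hc0 : 0 ≤ c := le_csSup hbdd h0A
  have hc1 : c ≤ 1 := csSup_le hne fun a ha => ha.1.2
  have hcA : c ∈ A := by
    rcases eq_or_lt_of_le hc0 with h | hcpos
    · rw [← h]; exact h0A
    · obtain ⟨L, hLc, hLlim⟩ := hX.2.2 c ⟨hcpos, hc1⟩
      obtain ⟨K, hK0, hK⟩ := cadlag_bounded hLc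
      obtain ⟨d, hd, hdd⟩ := hLlim 1 one_pos
      have hminpos : 0 < min d c := lt_min hd hcpos
      obtain ⟨a, haA, halt⟩ := exists_lt_of_lt_csSup hne (by linarith : c - min d c / 2 < c)
      obtain ⟨⟨ha0, ha1⟩, Ma, hMa⟩ := haA
      obtain ⟨Mc, hMc0, hMc⟩ := cadlag_bounded (hX.1 c ⟨hc0, hc1⟩)
      refine ⟨⟨hc0, hc1⟩, max (max Ma (K + 1)) Mc, fun u hu s hs => ?_⟩
      rcases le_or_gt u a with h | h
      · exact le_trans (hMa u ⟨hu.1, h⟩ s hs)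
          (le_trans (le_max_left _ _) (le_max_left _ _))
      · rcases eq_or_lt_of_le hu.2 with heq | huc
        · rw [heq]; exact le_trans (hMc s hs) (le_max_right _ _)
        · have hu1 : u ∈ Icc (0:ℝ) 1 := ⟨hu.1, le_trans hu.2 hc1⟩
          have hmax : max 0 (c - d) ≤ u := by
            apply max_le hu.1
            have : min d c ≤ d := min_le_left _ _
            linarith
          have hdJ := hdd u hmax huc
          obtain ⟨Mu, hMu0, hMu⟩ := cadlag_bounded (hX.1 u hu1)
          exact le_trans (bound_transfer hMu hK hdJ s hs)
            (le_trans (le_max_right _ _) (le_max_left _ _))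
  rcases eq_or_lt_of_le hc1 with h | hclt
  · obtain ⟨_, M, hM⟩ := hcA
    rw [h] at hM
    exact ⟨max M 0, le_max_right _ _, fun u hu s hs => le_trans (hM u hu s hs) (le_max_left _ _)⟩
  · exfalso
    obtain ⟨d, hd, hdd⟩ := hX.2.1 c ⟨hc0, hclt⟩ 1 one_pos
    obtain ⟨_, M, hM⟩ := hcA
    obtain ⟨Mc, hMc0, hMc⟩ := cadlag_bounded (hX.1 c ⟨hc0, hc1⟩)
    set c' := min 1 (c + d / 2) with hc'
    have hcc' : c < c' := lt_min hclt (by linarith)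
    have hc'A : c' ∈ A := by
      refine ⟨⟨le_trans hc0 hcc'.le, min_le_left _ _⟩, max M (Mc + 1), fun u hu s hs => ?_⟩
      rcases le_or_gt u c with h | h
      · exact le_trans (hM u ⟨hu.1, h⟩ s hs) (le_max_left _ _)
      · have hu2 : u ≤ min 1 (c + d) := by
          apply le_min (le_trans hu.2 (min_le_left _ _))
          have : u ≤ c + d / 2 := le_trans hu.2 (min_le_right _ _)
          linarith
        have hdJ := hdd u h.le hu2
        have hu1 : u ∈ Icc (0:ℝ) 1 := ⟨hu.1, le_trans hu.2 (min_le_left _ _)⟩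
        obtain ⟨Mu, hMu0, hMu⟩ := cadlag_bounded (hX.1 u hu1)
        exact le_trans (bound_transfer hMu hMc hdJ s hs) (le_max_right _ _)
    exact absurd (le_csSup hbdd hc'A) (not_le.2 hcc')


/-! ### Partition helpers -/

lemma part_mono {t : ℕ → ℝ} {v : ℕ} (hp : IsPartition t v) {i j : ℕ} (hij : i ≤ j) (hj : j ≤ v) :
    t i ≤ t j := by
  induction hij with
  | refl => exact le_rfl
  | @step k hk ih =>
      have hkv : k < v := hj
      exact le_trans (ih (le_of_lt hkv)) (hp.2.2.2 k hkv).le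

lemma part_mem {t : ℕ → ℝ} {v : ℕ} (hp : IsPartition t v) {i : ℕ} (hi : i ≤ v) :
    t i ∈ Icc (0:ℝ) 1 := by
  constructor
  · have := part_mono hp (Nat.zero_le i) hi
    rw [hp.2.1] at this; exact this
  · have := part_mono hp hi le_rfl
    rw [hp.2.2.1] at this; exact this

/-! ### wD helpers -/

lemma wD_nonneg (X : ℝ → ℝ → ℝ) (T : Set ℝ) : 0 ≤ wD X T := by
  apply Real.sSup_nonneg
  rintro x ⟨p, _, rfl⟩
  exact dJ_nonneg _ _

lemma wD'_set_bddBelow (X : ℝ → ℝ → ℝ) (δ : ℝ) :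
    BddBelow { r : ℝ | ∃ t v, IsPartition t v ∧ Sparse δ t v ∧
      ∀ i < v, wD X (Ico (t i) (t (i + 1))) ≤ r } := by
  refine ⟨0, ?_⟩
  rintro r ⟨t, v, hp, _, hb⟩
  exact le_trans (wD_nonneg X _) (hb 0 hp.1)

lemma wD'_set_nonempty (X : ℝ → ℝ → ℝ) {δ : ℝ} (hδ : δ < 1) :
    { r : ℝ | ∃ t v, IsPartition t v ∧ Sparse δ t v ∧
      ∀ i < v, wD X (Ico (t i) (t (i + 1))) ≤ r }.Nonempty := by
  refine ⟨wD X (Ico 0 1), fun i => if i = 0 then 0 else 1, 1, ⟨one_pos, rfl, rfl, ?_⟩, ?_, ?_⟩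
  · intro i hi
    interval_cases i
    norm_num
  · intro i hi
    interval_cases i
    norm_num
    linarith
  · intro i hi
    interval_cases i
    norm_num


def dDset (X Y : ℝ → ℝ → ℝ) : Set ℝ :=
  { r : ℝ | ∃ l, TimeChange l ∧ (∀ t ∈ Icc (0:ℝ) 1, |l t - t| ≤ r) ∧
    (∀ t ∈ Icc (0:ℝ) 1, dJ (X t) (Y (l t)) ≤ r) }

lemma dD_eq (X Y : ℝ → ℝ → ℝ) : dD X Y = sInf (dDset X Y) := rfl

lemma dJ_le_of_bounds {X : ℝ → ℝ → ℝ} {MX : ℝ}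
    (hMX : ∀ t ∈ Icc (0:ℝ) 1, ∀ s ∈ Icc (0:ℝ) 1, |X t s| ≤ MX)
    {a b : ℝ} (ha : a ∈ Icc (0:ℝ) 1) (hb : b ∈ Icc (0:ℝ) 1) :
    dJ (X a) (X b) ≤ MX + MX := by
  apply dJ_le (id_mem_dJset ?_)
  intro s hs
  calc |X a s - X b s| ≤ |X a s| + |X b s| := abs_sub _ _
  _ ≤ MX + MX := add_le_add (hMX a ha s hs) (hMX b hb s hs)


end TC

open TC in
/-- `x ↦ w'_D(x,δ)` is upper semicontinuous w.r.t. `d_D`. -/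
theorem stmt11 (δ : ℝ) (hδ : δ ∈ Ioo (0:ℝ) 1) (X : ℝ → ℝ → ℝ) (hX : CadlagD X)
    (ε : ℝ) (hε : 0 < ε) :
    ∃ η > 0, ∀ Y : ℝ → ℝ → ℝ, CadlagD Y → dD X Y < η → wD' Y δ < wD' X δ + ε := by
  obtain ⟨MX, hMX0, hMX⟩ := cadlagD_bounded hX
  have hSXne := wD'_set_nonempty X hδ.2
  obtain ⟨r0, hr0mem, hr0lt⟩ := exists_lt_of_csInf_lt hSXne
    (show sInf _ < wD' X δ + ε/3 by rw [show sInf _ = wD' X δ from rfl]; linarith)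
  obtain ⟨t, v, hpart, hsparse, hbound⟩ := hr0mem
  have hr0nonneg : 0 ≤ r0 := le_trans (wD_nonneg X _) (hbound 0 hpart.1)
  have hvne : (Finset.range v).Nonempty := ⟨0, Finset.mem_range.2 hpart.1⟩
  set g := (Finset.range v).inf' hvne (fun i => t (i+1) - t i - δ) with hg
  have hgpos : 0 < g := by
    rw [hg, Finset.lt_inf'_iff]
    intro i hi
    have := hsparse i (Finset.mem_range.1 hi); linarith
  have hgle : ∀ i < v, g ≤ t (i+1) - t i - δ := fun i hi =>
    Finset.inf'_le _ (Finset.mem_range.2 hi)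
  refine ⟨min (ε/6) (g/4), by positivity, ?_⟩
  intro Y hY hdist
  obtain ⟨MY, hMY0, hMY⟩ := cadlagD_bounded hY
  have hDne : (dDset X Y).Nonempty := by
    refine ⟨MX + MY, id, tc_id, fun t ht => by simpa using by positivity, fun t ht => ?_⟩
    apply dJ_le (id_mem_dJset ?_)
    intro s hs
    calc |X t s - Y t s| ≤ |X t s| + |Y t s| := abs_sub _ _
    _ ≤ MX + MY := add_le_add (hMX t ht s hs) (hMY t ht s hs)
  obtain ⟨r, hrmem, hrlt⟩ := exists_lt_of_csInf_lt hDne (by rw [← dD_eq]; exact hdist)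
  obtain ⟨l, hl, hlmove, hlclose⟩ := hrmem
  have hrpos : 0 ≤ r := le_trans (abs_nonneg _) (hlmove 0 ⟨le_rfl, zero_le_one⟩)
  obtain ⟨m, hm, hml, hlm⟩ := tc_inv hl
  set s : ℕ → ℝ := fun j => l (t j) with hsdef
  have hsmem : ∀ j ≤ v, s j ∈ Icc (0:ℝ) 1 := fun j hj => tc_mem hl (part_mem hpart hj)
  have hspart : IsPartition s v := by
    refine ⟨hpart.1, ?_, ?_, fun i hi =>
      hl.2.1 (part_mem hpart hi.le) (part_mem hpart hi) (hpart.2.2.2 i hi)⟩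
    · show l (t 0) = 0
      rw [hpart.2.1, tc_zero hl]
    · show l (t v) = 1
      rw [hpart.2.2.1, tc_one hl]
  have hrg : r < g / 4 := lt_of_lt_of_le hrlt (min_le_right _ _)
  have hssparse : Sparse δ s v := by
    intro i hi
    have h1 := abs_le.1 (hlmove (t i) (part_mem hpart hi.le))
    have h2 := abs_le.1 (hlmove (t (i+1)) (part_mem hpart hi))
    have h3 := hgle i hi
    show δ < l (t (i+1)) - l (t i)
    linarith [h1.1, h1.2, h2.1, h2.2]
  have hkey : ∀ i < v, ∀ p1 ∈ Ico (s i) (s (i+1)), ∀ p2 ∈ Ico (s i) (s (i+1)),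
      dJ (Y p1) (Y p2) ≤ r0 + 2*r := by
    intro i hi p1 hp1 p2 hp2
    have hIcc : ∀ p ∈ Ico (s i) (s (i+1)), p ∈ Icc (0:ℝ) 1 := fun p hp =>
      ⟨le_trans (hsmem i hi.le).1 hp.1, le_trans hp.2.le (hsmem (i+1) hi).2⟩
    have hinv : ∀ p ∈ Ico (s i) (s (i+1)),
        m p ∈ Ico (t i) (t (i+1)) ∧ m p ∈ Icc (0:ℝ) 1 ∧ l (m p) = p := by
      intro p hp
      have hpIcc := hIcc p hp
      have hmp := tc_mem hm hpIcc
      have hlmp := hlm p hpIcc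
      refine ⟨⟨?_, ?_⟩, hmp, hlmp⟩
      · by_contra hlt
        have h := hl.2.1 hmp (part_mem hpart hi.le) (not_le.1 hlt)
        rw [hlmp] at h
        exact absurd hp.1 (not_le.2 h)
      · by_contra hge
        have h2 := tc_le hl (part_mem hpart hi) hmp (not_lt.1 hge)
        rw [hlmp] at h2
        exact absurd hp.2 (not_lt.2 h2)
    obtain ⟨ha1, ha2, ha3⟩ := hinv p1 hp1
    obtain ⟨hb1, hb2, hb3⟩ := hinv p2 hp2
    have hc1 : dJ (X (m p1)) (Y p1) ≤ r := by
      have := hlclose (m p1) ha2; rwa [ha3] at this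
    have hc2 : dJ (X (m p2)) (Y p2) ≤ r := by
      have := hlclose (m p2) hb2; rwa [hb3] at this
    have hTsub : Ico (t i) (t (i+1)) ⊆ Icc (0:ℝ) 1 := fun q hq =>
      ⟨le_trans (part_mem hpart hi.le).1 hq.1, le_trans hq.2.le (part_mem hpart hi).2⟩
    have hmid : dJ (X (m p1)) (X (m p2)) ≤ r0 := by
      refine le_trans (le_csSup ?_ ?_) (hbound i hi)
      · refine ⟨MX + MX, ?_⟩
        rintro x ⟨q, hq, rfl⟩
        exact dJ_le_of_bounds hMX (hTsub hq.1) (hTsub hq.2)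
      · exact ⟨(m p1, m p2), ⟨ha1, hb1⟩, rfl⟩
    have hfin : ∀ θ > (0:ℝ), dJ (Y p1) (Y p2) ≤ (r0 + 2*r) + θ := by
      intro θ hθ
      have hne1 : (dJset (X (m p1)) (Y p1)).Nonempty :=
        dJset_nonempty_of_bounded (hMX _ ha2) (hMY _ (hIcc p1 hp1))
      have hne2 : (dJset (X (m p1)) (X (m p2))).Nonempty :=
        dJset_nonempty_of_bounded (hMX _ ha2) (hMX _ hb2)
      have hne3 : (dJset (X (m p2)) (Y p2)).Nonempty :=
        dJset_nonempty_of_bounded (hMX _ hb2) (hMY _ (hIcc p2 hp2))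
      obtain ⟨r1, hr1mem, hr1lt⟩ := dJ_lt_extract hne1
        (lt_of_le_of_lt hc1 (by linarith : r < r + θ/3))
      obtain ⟨r2, hr2mem, hr2lt⟩ := dJ_lt_extract hne2
        (lt_of_le_of_lt hmid (by linarith : r0 < r0 + θ/3))
      obtain ⟨r3, hr3mem, hr3lt⟩ := dJ_lt_extract hne3
        (lt_of_le_of_lt hc2 (by linarith : r < r + θ/3))
      have hcomp := dJset_comp (dJset_comp (dJset_symm hr1mem) hr2mem) (dJset_symm (dJset_symm hr3mem))
      have hd := dJ_le hcomp
      linarith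
    exact le_of_forall_pos_le_add hfin
  have hmemY : (r0 + 2*r) ∈ { r' : ℝ | ∃ t' v', IsPartition t' v' ∧ Sparse δ t' v' ∧
      ∀ i < v', wD Y (Ico (t' i) (t' (i + 1))) ≤ r' } := by
    refine ⟨s, v, hspart, hssparse, fun i hi => ?_⟩
    apply Real.sSup_le ?_ (by linarith)
    rintro x ⟨q, hq, rfl⟩
    exact hkey i hi q.1 hq.1 q.2 hq.2
  have hfinal : wD' Y δ ≤ r0 + 2*r := csInf_le (wD'_set_bddBelow Y δ) hmemY
  have hrε : r < ε/6 := lt_of_lt_of_le hrlt (min_le_left _ _)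
  linarith
end
end

section
/- Let T be a Borel subset of [0,1] and {X(t)}_{t∈T} random elements of a metric space (S,d) with t ↦ X(ω,t) right-continuous on T for every ω. Suppose there are α > 1/2, β ≥ 0 and a finite measure μ on T such that for all λ > 0 and r ≤ s ≤ t in T, P(min(d(X(r),X(s)), d(X(s),X(t))) ≥ λ) ≤ λ^{−4β} (μ(T ∩ (r,t]))^{2α}. Then there is a constant K = K(α,β) such that P(sup_{r≤s≤t, r,s,t∈T} min(d(X(r),X(s)), d(X(s),X(t))) > λ) ≤ K λ^{−4β} μ(T)^{2α} for all λ > 0. -/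
/-!
Write `γ = 4β`, `p = 2α > 1`. For a finite `J ⊆ T` whose points span `μ`-mass `u`, cut `J` into
the `N + 1` slots of `⌊N μ(T ∩ (min J, x]) / u⌋`, each of mass at most `u / N`. If no slot has a
gap (a triple with both increments `≥ λ / 4`), every point lies within `λ / 4` of an endpoint of
its slot, so a `λ`-gap of `J` becomes a `λ / 2`-gap among the at most `2 (N + 1)` slot endpoints,
which the hypothesis bounds directly. Induction on `#J` then gives
`P(gap ≥ λ) ≤ K λ^{-γ} u^p` as soon as `(N + 1) 4^γ N^{-p} ≤ 1 / 2`, which holds for large `N`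
because `p > 1`. Right-continuity reduces the event over `T` to one over a countable `D ⊆ T`
from which every point of `T` is approached from the right (a dense subset plus the countably
many right-isolated points), hence to finite `J ⊆ D` by continuity from below.
-/

open Set Filter

noncomputable section

open MeasureTheory Topology
open scoped ENNReal

section Gap

open Finset

variable {ι S η : Type*} [PseudoMetricSpace S]

def HasGap [Preorder ι] (f : ι → S) (A : Set ι) (lam : ℝ) : Prop :=
  ∃ r ∈ A, ∃ s ∈ A, ∃ u ∈ A, r ≤ s ∧ s ≤ u ∧ lam ≤ min (dist (f r) (f s)) (dist (f s) (f u))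

theorem HasGap.mono [Preorder ι] {f : ι → S} {A B : Set ι} {lam : ℝ} (h : HasGap f A lam)
    (hAB : A ⊆ B) : HasGap f B lam := by
  obtain ⟨r, hr, s, hs, u, hu, h⟩ := h
  exact ⟨r, hAB hr, s, hAB hs, u, hAB hu, h⟩

variable [LinearOrder η] {J : Finset ι} {κ : ι → η}

def block (J : Finset ι) (κ : ι → η) (k : η) : Finset ι := {x ∈ J | κ x = k}

theorem mem_block {x : ι} {k : η} : x ∈ block J κ k ↔ x ∈ J ∧ κ x = k := mem_filter

theorem block_ssubset {a b : ι} (ha : a ∈ J) (hb : b ∈ J) (hab : κ a ≠ κ b) (k : η) :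
    block J κ k ⊂ J := by
  refine filter_ssubset.2 ?_
  by_cases h : κ a = k
  · exact ⟨b, hb, fun hbk => hab (h.trans hbk.symm)⟩
  · exact ⟨a, ha, h⟩

variable [LinearOrder ι] {f : ι → S}

def blockPoles (J : Finset ι) (κ : ι → η) : Finset ι :=
  {x ∈ J | (∀ y ∈ J, κ y = κ x → x ≤ y) ∨ ∀ y ∈ J, κ y = κ x → y ≤ x}

theorem card_blockPoles_le : #(blockPoles J κ) ≤ 2 * #(J.image κ) := by
  have key (r : ι → ι → Prop) [DecidableRel r] (hr : ∀ x y, r x y → r y x → x = y) :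
      #{x ∈ J | ∀ y ∈ J, κ y = κ x → r x y} ≤ #(J.image κ) := by
    refine card_le_card_of_injOn κ (fun x hx => mem_image_of_mem κ (mem_filter.1 hx).1) ?_
    intro x hx x' hx' h
    exact hr x x' ((mem_filter.1 hx).2 x' (mem_filter.1 hx').1 h.symm)
      ((mem_filter.1 hx').2 x (mem_filter.1 hx).1 h)
  rw [blockPoles, filter_or, two_mul]
  exact (Finset.card_union_le _ _).trans (add_le_add (key _ fun _ _ => le_antisymm)
    (key (fun x y => y ≤ x) fun _ _ h h' => le_antisymm h' h))

theorem exists_mem_blockPoles_dist_lt {ε : ℝ} {x : ι} (hx : x ∈ J)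
    (hJ : ¬ HasGap f (block J κ (κ x)) ε) :
    ∃ π ∈ blockPoles J κ, κ π = κ x ∧ dist (f x) (f π) < ε := by
  have hxB : x ∈ block J κ (κ x) := mem_block.2 ⟨hx, rfl⟩
  obtain ⟨p, hpB, hp⟩ := exists_min_image _ id ⟨x, hxB⟩
  obtain ⟨q, hqB, hq⟩ := exists_max_image _ id ⟨x, hxB⟩
  obtain ⟨hpJ, hpκ⟩ := mem_block.1 hpB
  obtain ⟨hqJ, hqκ⟩ := mem_block.1 hqB
  have hdist : dist (f p) (f x) < ε ∨ dist (f x) (f q) < ε := by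
    by_contra! h
    exact hJ ⟨p, hpB, x, hxB, q, hqB, hp x hxB, hq x hxB, le_min h.1 h.2⟩
  rcases hdist with h | h
  · refine ⟨p, mem_filter.2 ⟨hpJ, Or.inl fun y hy hyκ => hp y ?_⟩, hpκ, by rwa [dist_comm]⟩
    exact mem_block.2 ⟨hy, hyκ.trans hpκ⟩
  · refine ⟨q, mem_filter.2 ⟨hqJ, Or.inr fun y hy hyκ => hq y ?_⟩, hqκ, h⟩
    exact mem_block.2 ⟨hy, hyκ.trans hqκ⟩

/-- If `πy < πx`, both poles lie in the block of `x` and `πx` is its maximum, so `(x, y, πx)`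
is a gap of that block. -/
theorem blockPole_le_of_le (hκ : MonotoneOn κ J) {lam : ℝ} (hlam : 0 < lam) {x y πx πy : ι}
    (hx : x ∈ J) (hy : y ∈ J) (hxy : x ≤ y) (hd : lam ≤ dist (f x) (f y))
    (hJ : ¬ HasGap f (block J κ (κ x)) (lam / 4))
    (hπx : πx ∈ blockPoles J κ) (hπy : πy ∈ blockPoles J κ)
    (hκx : κ πx = κ x) (hκy : κ πy = κ y) (hdx : dist (f x) (f πx) < lam / 4) : πx ≤ πy := by
  by_contra! h
  obtain ⟨hπxJ, hπx⟩ := mem_filter.1 hπx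
  have hπyJ := (mem_filter.1 hπy).1
  have hk : κ x = κ y := le_antisymm (hκ hx hy hxy) (hκy ▸ hκx ▸ hκ hπyJ hπxJ h.le)
  rcases hπx with hmin | hmax
  · exact h.not_ge (hmin πy hπyJ (by rw [hκy, hκx, hk]))
  · refine hJ ⟨x, mem_block.2 ⟨hx, rfl⟩, y, mem_block.2 ⟨hy, hk.symm⟩, πx,
      mem_block.2 ⟨hπxJ, hκx⟩, hxy, hmax y hy (by rw [hκx, hk]), le_min ?_ ?_⟩
    · linarith
    · linarith [dist_triangle (f x) (f πx) (f y), dist_comm (f πx) (f y)]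

theorem HasGap.exists_block_or_blockPoles {lam : ℝ} (h : HasGap f J lam) (hκ : MonotoneOn κ J)
    (hlam : 0 < lam) :
    (∃ k ∈ J.image κ, HasGap f (block J κ k) (lam / 4)) ∨ HasGap f (blockPoles J κ) (lam / 2) := by
  refine or_iff_not_imp_left.2 fun hblock => ?_
  push Not at hblock
  have hno {w : ι} (hw : w ∈ J) : ¬ HasGap f (block J κ (κ w)) (lam / 4) :=
    hblock _ (mem_image_of_mem κ hw)
  obtain ⟨x, hx, y, hy, z, hz, hxy, hyz, hgap⟩ := h
  rw [le_min_iff] at hgap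
  obtain ⟨πx, hπx, hκx, hdx⟩ := exists_mem_blockPoles_dist_lt hx (hno hx)
  obtain ⟨πy, hπy, hκy, hdy⟩ := exists_mem_blockPoles_dist_lt hy (hno hy)
  obtain ⟨πz, hπz, hκz, hdz⟩ := exists_mem_blockPoles_dist_lt hz (hno hz)
  refine ⟨πx, hπx, πy, hπy, πz, hπz,
    blockPole_le_of_le hκ hlam hx hy hxy hgap.1 (hno hx) hπx hπy hκx hκy hdx,
    blockPole_le_of_le hκ hlam hy hz hyz hgap.2 (hno hy) hπy hπz hκy hκz hdy, le_min ?_ ?_⟩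
  · linarith [dist_triangle4 (f x) (f πx) (f πy) (f y), dist_comm (f πy) (f y)]
  · linarith [dist_triangle4 (f y) (f πy) (f πz) (f z), dist_comm (f πz) (f z)]

end Gap

def massIoc (μ : Measure ℝ) (T : Set ℝ) (a b : ℝ) : ℝ := (μ (T ∩ Ioc a b)).toReal

section Mass

variable {μ : Measure ℝ} {T : Set ℝ} {a b x y : ℝ}

theorem massIoc_nonneg : 0 ≤ massIoc μ T a b := ENNReal.toReal_nonneg

theorem massIoc_self : massIoc μ T a a = 0 := by simp [massIoc]

variable [IsFiniteMeasure μ]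

theorem massIoc_mono {a' b' : ℝ} (ha : a ≤ a') (hb : b' ≤ b) :
    massIoc μ T a' b' ≤ massIoc μ T a b :=
  ENNReal.toReal_mono (measure_ne_top _ _)
    (measure_mono (inter_subset_inter_right _ (Ioc_subset_Ioc ha hb)))

theorem massIoc_le_toReal : massIoc μ T a b ≤ (μ T).toReal :=
  ENNReal.toReal_mono (measure_ne_top _ _) (measure_mono inter_subset_left)

theorem massIoc_add (hT : MeasurableSet T) {c : ℝ} (hab : a ≤ b) (hbc : b ≤ c) :
    massIoc μ T a b + massIoc μ T b c = massIoc μ T a c := by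
  rw [massIoc, massIoc, massIoc, ← ENNReal.toReal_add (measure_ne_top _ _) (measure_ne_top _ _),
    ← measure_union ((Ioc_disjoint_Ioc_of_le le_rfl).mono inter_subset_right inter_subset_right)
      (hT.inter measurableSet_Ioc), ← inter_union_distrib_left, Ioc_union_Ioc_eq_Ioc hab hbc]

theorem massIoc_lt_of_floor_eq (hT : MeasurableSet T) {w : ℝ} (hw : 0 < w) (hax : a ≤ x)
    (hxy : x ≤ y) (h : ⌊massIoc μ T a x / w⌋₊ = ⌊massIoc μ T a y / w⌋₊) :
    massIoc μ T x y < w := by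
  have h1 := Nat.floor_le (div_nonneg (massIoc_nonneg (μ := μ) (T := T) (a := a) (b := x)) hw.le)
  have h2 := Nat.lt_floor_add_one (massIoc μ T a y / w)
  rw [← h, ← massIoc_add hT hax hxy, add_div] at h2
  exact (div_lt_one hw).1 (by linarith)

theorem monotone_floor_massIoc_div {w : ℝ} (hw : 0 ≤ w) :
    Monotone fun x => ⌊massIoc μ T a x / w⌋₊ :=
  fun _ _ hxy => Nat.floor_mono (div_le_div_of_nonneg_right (massIoc_mono le_rfl hxy) hw)

end Mass

section Finite

open Finset

variable {Ω S : Type*} [MeasurableSpace Ω] [PseudoMetricSpace S] {P : Measure Ω}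

theorem measure_hasGap_le_card_pow {ι : Type*} [Preorder ι] {X : ι → Ω → S} (J : Finset ι)
    {lam : ℝ} {c : ℝ≥0∞} (h : ∀ r ∈ J, ∀ s ∈ J, ∀ u ∈ J, r ≤ s → s ≤ u →
      P {ω | lam ≤ min (dist (X r ω) (X s ω)) (dist (X s ω) (X u ω))} ≤ c) :
    P {ω | HasGap (X · ω) J lam} ≤ #J ^ 3 * c := by
  classical
  let E (i : ι × ι × ι) : Set Ω := {ω | i.1 ≤ i.2.1 ∧ i.2.1 ≤ i.2.2 ∧
    lam ≤ min (dist (X i.1 ω) (X i.2.1 ω)) (dist (X i.2.1 ω) (X i.2.2 ω))}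
  have hE : ∀ i ∈ J ×ˢ J ×ˢ J, P (E i) ≤ c := by
    simp only [mem_product]
    rintro ⟨r, s, u⟩ ⟨hr, hs, hu⟩
    by_cases hord : r ≤ s ∧ s ≤ u
    · exact (measure_mono fun ω hω => hω.2.2).trans (h r hr s hs u hu hord.1 hord.2)
    · rw [show E (r, s, u) = ∅ from eq_empty_of_forall_notMem fun ω hω => hord ⟨hω.1, hω.2.1⟩,
        measure_empty]
      exact zero_le
  calc P {ω | HasGap (X · ω) J lam} ≤ P (⋃ i ∈ J ×ˢ J ×ˢ J, E i) := by
        refine measure_mono fun ω ⟨r, hr, s, hs, u, hu, hω⟩ => mem_biUnion (x := (r, s, u)) ?_ hω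
        simp_all
    _ ≤ ∑ i ∈ J ×ˢ J ×ˢ J, c := (measure_biUnion_finset_le _ _).trans (sum_le_sum hE)
    _ = #J ^ 3 * c := by simp [card_product, pow_three, mul_assoc]

theorem div_rpow_neg {x c : ℝ} (hx : 0 ≤ x) (hc : 0 < c) (γ : ℝ) :
    (x / c) ^ (-γ) = c ^ γ * x ^ (-γ) := by
  rw [Real.div_rpow hx hc.le, Real.rpow_neg hc.le, div_inv_eq_mul, mul_comm]

def gapConstant (N : ℕ) (γ : ℝ) : ℝ := 2 * (2 * (N + 1)) ^ 3 * 2 ^ γ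

theorem gapConstant_pos (N : ℕ) (γ : ℝ) : 0 < gapConstant N γ := by
  unfold gapConstant
  positivity

theorem gapConstant_recursion {N : ℕ} {γ p lam u : ℝ}
    (hNc : ((N : ℝ) + 1) * 4 ^ γ / (N : ℝ) ^ p ≤ 1 / 2)
    (hlam : 0 < lam) (hu : 0 ≤ u) :
    (N + 1) * (gapConstant N γ * (lam / 4) ^ (-γ) * (u / N) ^ p) +
        (2 * (N + 1)) ^ 3 * ((lam / 2) ^ (-γ) * u ^ p) ≤
      gapConstant N γ * lam ^ (-γ) * u ^ p := by
  rw [div_rpow_neg hlam.le four_pos, div_rpow_neg hlam.le two_pos,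
    Real.div_rpow hu (Nat.cast_nonneg N)]
  set K := gapConstant N γ
  set M := lam ^ (-γ) * u ^ p
  have hM : 0 ≤ M := by positivity
  have hK : 0 ≤ K := (gapConstant_pos N γ).le
  calc _ = (N + 1) * 4 ^ γ / N ^ p * (K * M) + K / 2 * M := by
          simp only [K, M, gapConstant]; ring
    _ ≤ 1 / 2 * (K * M) + K / 2 * M := by gcongr
    _ = _ := by ring

variable {X : ℝ → Ω → S} {μ : Measure ℝ} [IsFiniteMeasure μ] {T : Set ℝ} {γ p : ℝ}

def GapTailBound (P : Measure Ω) (X : ℝ → Ω → S) (μ : Measure ℝ) (T : Set ℝ) (γ p : ℝ) : Prop :=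
  ∀ lam : ℝ, 0 < lam → ∀ r ∈ T, ∀ s ∈ T, ∀ u ∈ T, r ≤ s → s ≤ u →
    P {ω | lam ≤ min (dist (X r ω) (X s ω)) (dist (X s ω) (X u ω))} ≤
      ENNReal.ofReal (lam ^ (-γ) * massIoc μ T r u ^ p)

theorem GapTailBound.measure_hasGap_le (hH : GapTailBound P X μ T γ p) (hp : 0 ≤ p)
    {J : Finset ℝ} (hJT : ↑J ⊆ T) {lam a b : ℝ} (hlam : 0 < lam) (hJab : ↑J ⊆ Icc a b) :
    P {ω | HasGap (X · ω) J lam} ≤ #J ^ 3 * ENNReal.ofReal (lam ^ (-γ) * massIoc μ T a b ^ p) :=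
  measure_hasGap_le_card_pow J fun r hr s hs u hu hrs hsu =>
    (hH lam hlam r (hJT hr) s (hJT hs) u (hJT hu) hrs hsu).trans <| ENNReal.ofReal_le_ofReal <| by
      gcongr
      · exact massIoc_nonneg
      · exact massIoc_mono (hJab hr).1 (hJab hu).2

theorem measure_hasGap_le_sum_block_add_blockPoles {ι η : Type*} [LinearOrder ι] [LinearOrder η]
    {X : ι → Ω → S} {J : Finset ι} {κ : ι → η} (hκ : MonotoneOn κ J) {lam : ℝ} (hlam : 0 < lam) :
    P {ω | HasGap (X · ω) J lam} ≤
      ∑ k ∈ J.image κ, P {ω | HasGap (X · ω) (block J κ k) (lam / 4)} +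
        P {ω | HasGap (X · ω) (blockPoles J κ) (lam / 2)} := by
  refine (measure_mono fun ω hω => ?_).trans <|
    (measure_union_le _ _).trans (add_le_add_left (measure_biUnion_finset_le _ _) _)
  exact (hω.exists_block_or_blockPoles hκ hlam).imp (fun ⟨k, hk, h⟩ => mem_biUnion hk h) id

theorem measure_hasGap_le_of_forall_ssubset (hT : MeasurableSet T) (hp : 0 ≤ p) {N : ℕ}
    (hN : 0 < N) (hNc : ((N : ℝ) + 1) * 4 ^ γ / (N : ℝ) ^ p ≤ 1 / 2)
    (hH : GapTailBound P X μ T γ p) {J : Finset ℝ} (hJT : ↑J ⊆ T) {a b : ℝ} (ha : a ∈ J)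
    (hb : b ∈ J) (hJab : ↑J ⊆ Icc a b) (hu : 0 < massIoc μ T a b)
    (ih : ∀ B ⊂ J, ∀ {lam a b : ℝ}, 0 < lam → ↑B ⊆ Icc a b → P {ω | HasGap (X · ω) B lam} ≤
      ENNReal.ofReal (gapConstant N γ * lam ^ (-γ) * massIoc μ T a b ^ p))
    {lam : ℝ} (hlam : 0 < lam) :
    P {ω | HasGap (X · ω) J lam} ≤
      ENNReal.ofReal (gapConstant N γ * lam ^ (-γ) * massIoc μ T a b ^ p) := by
  set u := massIoc μ T a b
  have hK := gapConstant_pos N γ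
  have hw : 0 < u / N := by positivity
  set κ := fun x => ⌊massIoc μ T a x / (u / N)⌋₊
  have hκ : Monotone κ := monotone_floor_massIoc_div hw.le
  have hκb : κ b = N := by simp [κ, u, div_div_cancel₀ hu.ne']
  have hκab : κ a ≠ κ b := by simp [κ, massIoc_self, hκb, hN.ne]
  have himage : #(J.image κ) ≤ N + 1 := by
    refine (card_le_card fun k hk => ?_).trans (card_range (N + 1)).le
    obtain ⟨x, hx, rfl⟩ := mem_image.1 hk
    exact mem_range.2 (Nat.lt_succ_of_le (hκb ▸ hκ (hJab hx).2))
  have hblock (k : ℕ) (hk : k ∈ J.image κ) : P {ω | HasGap (X · ω) (block J κ k) (lam / 4)} ≤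
      ENNReal.ofReal (gapConstant N γ * (lam / 4) ^ (-γ) * (u / N) ^ p) := by
    obtain ⟨x, hx, rfl⟩ := mem_image.1 hk
    set B := block J κ (κ x)
    have hB : B.Nonempty := ⟨x, mem_block.2 ⟨hx, rfl⟩⟩
    have hBJ : B ⊂ J := block_ssubset ha hb hκab _
    refine (ih B hBJ (a := B.min' hB) (b := B.max' hB) (by positivity)
      fun y hy => ⟨B.min'_le y hy, B.le_max' y hy⟩).trans ?_
    gcongr
    · exact massIoc_nonneg
    refine (massIoc_lt_of_floor_eq hT hw (hJab (hBJ.subset (B.min'_mem hB))).1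
      (B.min'_le _ (B.max'_mem hB)) ?_).le
    exact (mem_block.1 (B.min'_mem hB)).2.trans (mem_block.1 (B.max'_mem hB)).2.symm
  have hpoles : P {ω | HasGap (X · ω) (blockPoles J κ) (lam / 2)} ≤
      ((2 * (N + 1) : ℕ) : ℝ≥0∞) ^ 3 * ENNReal.ofReal ((lam / 2) ^ (-γ) * u ^ p) := by
    refine (hH.measure_hasGap_le hp (fun x hx => hJT (filter_subset _ _ hx)) (by positivity)
      fun x hx => hJab (filter_subset _ _ hx)).trans ?_
    gcongr
    exact_mod_cast card_blockPoles_le.trans (Nat.mul_le_mul_left 2 himage)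
  calc P {ω | HasGap (X · ω) J lam}
      ≤ (N + 1 : ℕ) * ENNReal.ofReal (gapConstant N γ * (lam / 4) ^ (-γ) * (u / N) ^ p) +
          ((2 * (N + 1) : ℕ) : ℝ≥0∞) ^ 3 * ENNReal.ofReal ((lam / 2) ^ (-γ) * u ^ p) := by
        refine (measure_hasGap_le_sum_block_add_blockPoles (hκ.monotoneOn _) hlam).trans
          (add_le_add ?_ hpoles)
        refine (sum_le_card_nsmul _ _ _ hblock).trans ?_
        rw [nsmul_eq_mul]
        gcongr
    _ = ENNReal.ofReal ((N + 1) * (gapConstant N γ * (lam / 4) ^ (-γ) * (u / N) ^ p) +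
          (2 * (N + 1)) ^ 3 * ((lam / 2) ^ (-γ) * u ^ p)) := by
        rw [ENNReal.ofReal_add (by positivity) (by positivity),
          ENNReal.ofReal_mul (p := (N : ℝ) + 1) (by positivity),
          ENNReal.ofReal_mul (p := (2 * ((N : ℝ) + 1)) ^ 3) (by positivity)]
        norm_cast
    _ ≤ _ := ENNReal.ofReal_le_ofReal (gapConstant_recursion hNc hlam hu.le)

theorem measure_hasGap_finset_le (hT : MeasurableSet T) (hp : 0 < p) {N : ℕ} (hN : 0 < N)
    (hNc : ((N : ℝ) + 1) * 4 ^ γ / (N : ℝ) ^ p ≤ 1 / 2) (hH : GapTailBound P X μ T γ p)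
    (J : Finset ℝ) (hJT : ↑J ⊆ T) {lam a b : ℝ} (hlam : 0 < lam) (hJab : ↑J ⊆ Icc a b) :
    P {ω | HasGap (X · ω) J lam} ≤
      ENNReal.ofReal (gapConstant N γ * lam ^ (-γ) * massIoc μ T a b ^ p) := by
  induction J using Finset.strongInduction generalizing lam a b with
  | H J ih =>
  rcases J.eq_empty_or_nonempty with rfl | hne
  · simp [HasGap]
  have hJ : ↑J ⊆ Icc (J.min' hne) (J.max' hne) := fun x hx => ⟨J.min'_le x hx, J.le_max' x hx⟩
  refine le_trans ?_ <| ENNReal.ofReal_le_ofReal <| mul_le_mul_of_nonneg_left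
    (Real.rpow_le_rpow massIoc_nonneg (massIoc_mono (hJab (J.min'_mem hne)).1
      (hJab (J.max'_mem hne)).2) hp.le) (by have := gapConstant_pos N γ; positivity)
  rcases massIoc_nonneg.eq_or_lt with hu | hu
  · refine (hH.measure_hasGap_le hp.le hJT hlam hJ).trans ?_
    rw [← hu, Real.zero_rpow hp.ne', mul_zero, ENNReal.ofReal_zero, mul_zero]
    exact zero_le
  exact measure_hasGap_le_of_forall_ssubset hT hp.le hN hNc hH hJT (J.min'_mem hne)
    (J.max'_mem hne) hJ hu (fun B hB => ih B hB ((coe_subset.2 hB.subset).trans hJT)) hlam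

end Finite

section Approximation

variable {Ω S : Type*} [MeasurableSpace Ω] [PseudoMetricSpace S] {P : Measure Ω}

theorem measure_hasGap_le_of_countable {ι : Type*} [Preorder ι] {X : ι → Ω → S} {A : Set ι}
    (hA : A.Countable) {lam : ℝ} {c : ℝ≥0∞}
    (h : ∀ J : Finset ι, ↑J ⊆ A → P {ω | HasGap (X · ω) J lam} ≤ c) :
    P {ω | HasGap (X · ω) A lam} ≤ c := by
  classical
  have := hA.to_subtype
  let E (J : Finset A) : Set Ω := {ω | HasGap (X · ω) (J.map (Function.Embedding.subtype _)) lam}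
  have hE : Monotone E := fun J J' hJ ω hω => hω.mono (by simpa using hJ)
  calc P {ω | HasGap (X · ω) A lam} ≤ P (⋃ J, E J) := by
        refine measure_mono fun ω ⟨r, hr, s, hs, u, hu, hω⟩ => mem_iUnion.2
          ⟨{⟨r, hr⟩, ⟨s, hs⟩, ⟨u, hu⟩}, r, ?_, s, ?_, u, ?_, hω⟩ <;> simp
    _ = ⨆ J, P (E J) := hE.directed_le.measure_iUnion
    _ ≤ c := iSup_le fun J => h _ (by simp)

theorem exists_countable_subset_forall_mem_closure_inter_Ici (T : Set ℝ) :
    ∃ D ⊆ T, D.Countable ∧ ∀ t ∈ T, t ∈ closure (D ∩ Ici t) := by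
  obtain ⟨D₁, hD₁T, hD₁c, hTD₁⟩ :=
    (TopologicalSpace.IsSeparable.of_separableSpace T).exists_countable_dense_subset
  refine ⟨D₁ ∪ {x ∈ T | 𝓝[T ∩ Ioi x] x = ⊥}, union_subset hD₁T (sep_subset _ _),
    hD₁c.union countable_setOfPred_isolated_right_within, fun t ht => ?_⟩
  by_cases hiso : 𝓝[T ∩ Ioi t] t = ⊥
  · exact subset_closure ⟨Or.inr ⟨ht, hiso⟩, mem_Ici.2 le_rfl⟩
  have hT : t ∈ closure (T ∩ Ioi t) := mem_closure_iff_nhdsWithin_neBot.2 ⟨hiso⟩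
  have hsub : Ioi t ∩ D₁ ⊆ D₁ ∩ Ici t := fun y hy => ⟨hy.2, mem_Ici.2 hy.1.le⟩
  have hD₁ : T ∩ Ioi t ⊆ closure (D₁ ∩ Ici t) := fun x hx =>
    closure_mono hsub (isOpen_Ioi.inter_closure (mem_inter hx.2 (hTD₁ hx.1)))
  exact closure_mono (inter_subset_inter_left _ subset_union_left)
    (closure_minimal hD₁ isClosed_closure hT)

theorem exists_mem_Ico_dist_lt {f : ℝ → S} {T D : Set ℝ} (hDT : D ⊆ T) {t b ε : ℝ}
    (hf : ContinuousWithinAt f (T ∩ Ioi t) t) (ht : t ∈ closure (D ∩ Ici t)) (hb : t < b)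
    (hε : 0 < ε) : ∃ t' ∈ D, t ≤ t' ∧ t' < b ∧ dist (f t') (f t) < ε := by
  have hc : ContinuousWithinAt f (D ∩ Ici t) t := hf.insert.mono fun x ⟨hxD, hx⟩ =>
    (eq_or_lt_of_le hx).imp Eq.symm fun h => ⟨hDT hxD, h⟩
  have := mem_closure_iff_nhdsWithin_neBot.1 ht
  obtain ⟨x, ⟨hxD, hx⟩, hxb, hxf⟩ := (eventually_mem_nhdsWithin.and
    (((eventually_lt_nhds hb).filter_mono nhdsWithin_le_nhds).and
      (hc.eventually (Metric.ball_mem_nhds _ hε)))).exists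
  exact ⟨x, hxD, hx, hxb, hxf⟩

theorem hasGap_of_forall_mem_closure_inter_Ici {f : ℝ → S} {T D : Set ℝ}
    (hf : ∀ t ∈ T, ContinuousWithinAt f (T ∩ Ioi t) t) (hDT : D ⊆ T)
    (hD : ∀ t ∈ T, t ∈ closure (D ∩ Ici t)) {lam r s u : ℝ} (hlam : 0 ≤ lam) (hr : r ∈ T)
    (hs : s ∈ T) (hu : u ∈ T) (hrs : r ≤ s) (hsu : s ≤ u)
    (h : lam < min (dist (f r) (f s)) (dist (f s) (f u))) : HasGap f D lam := by
  obtain ⟨h₁, h₂⟩ := lt_min_iff.1 h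
  obtain ⟨δ, hδ, hδ₁, hδ₂⟩ : ∃ δ > 0, δ ≤ dist (f r) (f s) - lam ∧ δ ≤ dist (f s) (f u) - lam :=
    ⟨_, lt_min (sub_pos.2 h₁) (sub_pos.2 h₂), min_le_left _ _, min_le_right _ _⟩
  have hrs' : r < s := hrs.lt_of_ne (by rintro rfl; simp at h₁; linarith)
  have hsu' : s < u := hsu.lt_of_ne (by rintro rfl; simp at h₂; linarith)
  obtain ⟨r', hr'D, hrr', hr's, hdr⟩ :=
    exists_mem_Ico_dist_lt hDT (hf r hr) (hD r hr) hrs' (half_pos hδ)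
  obtain ⟨s', hs'D, hss', hs'u, hds⟩ :=
    exists_mem_Ico_dist_lt hDT (hf s hs) (hD s hs) hsu' (half_pos hδ)
  obtain ⟨u', hu'D, huu', -, hdu⟩ :=
    exists_mem_Ico_dist_lt hDT (hf u hu) (hD u hu) (lt_add_one u) (half_pos hδ)
  refine ⟨r', hr'D, s', hs'D, u', hu'D, by linarith, by linarith, le_min ?_ ?_⟩
  · linarith [dist_triangle4 (f r) (f r') (f s') (f s), dist_comm (f r) (f r')]
  · linarith [dist_triangle4 (f s) (f s') (f u') (f u), dist_comm (f s) (f s')]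

end Approximation

theorem exists_nat_add_one_mul_div_rpow_le {p : ℝ} (hp : 1 < p) (c : ℝ) {ε : ℝ} (hε : 0 < ε) :
    ∃ N : ℕ, 0 < N ∧ ((N : ℝ) + 1) * c / (N : ℝ) ^ p ≤ ε := by
  have hlim : Tendsto (fun x : ℝ => c * (x ^ (-(p - 1)) + x ^ (-p))) atTop (𝓝 0) := by
    have := ((tendsto_rpow_neg_atTop (by linarith : 0 < p - 1)).add
      (tendsto_rpow_neg_atTop (by linarith : 0 < p))).const_mul c
    rwa [add_zero, mul_zero] at this
  obtain ⟨N, hN, hNε⟩ := ((eventually_gt_atTop 0).and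
    ((hlim.comp tendsto_natCast_atTop_atTop).eventually (ge_mem_nhds hε))).exists
  refine ⟨N, hN, le_of_eq_of_le ?_ hNε⟩
  have hN' : (0 : ℝ) < N := by exact_mod_cast hN
  simp only [Function.comp, Real.rpow_neg hN'.le, Real.rpow_sub hN', Real.rpow_one]
  field_simp

theorem stmt19_general (α β : ℝ) (hα : 1 / 2 < α) :
    ∃ K : ℝ, 0 < K ∧
      ∀ (S : Type) [MetricSpace S] [MeasurableSpace S] [BorelSpace S]
        (Ω : Type) [MeasurableSpace Ω]
        (P : MeasureTheory.Measure Ω), MeasureTheory.IsProbabilityMeasure P →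
      ∀ (T : Set ℝ), MeasurableSet T → T ⊆ Icc 0 1 →
      ∀ (X : ℝ → Ω → S), (∀ t ∈ T, Measurable (X t)) →
        (∀ ω : Ω, ∀ t ∈ T, Filter.Tendsto (fun u => X u ω)
          (nhdsWithin t (T ∩ Ioi t)) (nhds (X t ω))) →
      ∀ (μ : MeasureTheory.Measure ℝ), MeasureTheory.IsFiniteMeasure μ →
        (∀ lam : ℝ, 0 < lam → ∀ r ∈ T, ∀ s ∈ T, ∀ u ∈ T, r ≤ s → s ≤ u →
          P {ω | lam ≤ min (dist (X r ω) (X s ω)) (dist (X s ω) (X u ω))} ≤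
            ENNReal.ofReal (lam ^ (-(4 * β)) * ((μ (T ∩ Ioc r u)).toReal) ^ (2 * α))) →
        ∀ lam : ℝ, 0 < lam →
          P {ω | ∃ r ∈ T, ∃ s ∈ T, ∃ u ∈ T, r ≤ s ∧ s ≤ u ∧
              lam < min (dist (X r ω) (X s ω)) (dist (X s ω) (X u ω))} ≤
            ENNReal.ofReal (K * lam ^ (-(4 * β)) * ((μ T).toReal) ^ (2 * α)) := by
  obtain ⟨N, hN, hNc⟩ := exists_nat_add_one_mul_div_rpow_le (by linarith : 1 < 2 * α)
    ((4 : ℝ) ^ (4 * β)) (by norm_num : (0 : ℝ) < 1 / 2)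
  refine ⟨gapConstant N (4 * β), gapConstant_pos N _, ?_⟩
  intro S _ _ _ Ω _ P _ T hT hT01 X _ hXrc μ _ hH lam hlam
  obtain ⟨D, hDT, hDc, hD⟩ := exists_countable_subset_forall_mem_closure_inter_Ici T
  calc _ ≤ P {ω | HasGap (X · ω) D lam} := by
        refine measure_mono fun ω ⟨r, hr, s, hs, u, hu, hrs, hsu, h⟩ => ?_
        exact hasGap_of_forall_mem_closure_inter_Ici (hXrc ω) hDT hD hlam.le hr hs hu hrs hsu h
    _ ≤ _ := measure_hasGap_le_of_countable hDc fun J hJD => ?_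
  have hJT := hJD.trans hDT
  refine (measure_hasGap_finset_le hT (by linarith) hN hNc hH J hJT hlam
    (hJT.trans hT01)).trans (ENNReal.ofReal_le_ofReal ?_)
  have := gapConstant_pos N (4 * β)
  gcongr
  exacts [massIoc_nonneg, massIoc_le_toReal]

/-- Billingsley-type maximal inequality for random elements of a metric
space indexed by a Borel set `T ⊆ [0,1]`, right-continuous in `t`. -/
theorem stmt19 (α β : ℝ) (hα : 1 / 2 < α) (hβ : 0 ≤ β) :
    ∃ K : ℝ, 0 < K ∧
      ∀ (S : Type) [MetricSpace S] [MeasurableSpace S] [BorelSpace S]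
        (Ω : Type) [MeasurableSpace Ω]
        (P : MeasureTheory.Measure Ω), MeasureTheory.IsProbabilityMeasure P →
      ∀ (T : Set ℝ), MeasurableSet T → T ⊆ Icc 0 1 →
      ∀ (X : ℝ → Ω → S), (∀ t ∈ T, Measurable (X t)) →
        (∀ ω : Ω, ∀ t ∈ T, Filter.Tendsto (fun u => X u ω)
          (nhdsWithin t (T ∩ Ioi t)) (nhds (X t ω))) →
      ∀ (μ : MeasureTheory.Measure ℝ), MeasureTheory.IsFiniteMeasure μ →
        (∀ lam : ℝ, 0 < lam → ∀ r ∈ T, ∀ s ∈ T, ∀ u ∈ T, r ≤ s → s ≤ u →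
          P {ω | lam ≤ min (dist (X r ω) (X s ω)) (dist (X s ω) (X u ω))} ≤
            ENNReal.ofReal (lam ^ (-(4 * β)) * ((μ (T ∩ Ioc r u)).toReal) ^ (2 * α))) →
        ∀ lam : ℝ, 0 < lam →
          P {ω | ∃ r ∈ T, ∃ s ∈ T, ∃ u ∈ T, r ≤ s ∧ s ≤ u ∧
              lam < min (dist (X r ω) (X s ω)) (dist (X s ω) (X u ω))} ≤
            ENNReal.ofReal (K * lam ^ (-(4 * β)) * ((μ T).toReal) ^ (2 * α)) :=
  stmt19_general α β hα
end
end
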